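/- Let p ≥ 1 be an integer, a, b, τ > 0 with |1 − 1/τ²| < 1, s ∈ ℝ, and y ∈ ℝ^p; set Z = ‖y‖². Define the joint density on ℝ^p × (0,1): f(β, κ) = N_p(y; β, I) N_p(β; 0, (1/κ − 1) I) π_{a,b,τ,s}(κ). Then E(κ | y) := [∬ κ f(β,κ) dβ dκ] / [∬ f(β,κ) dβ dκ] = [(a + p/2)/(a + b + p/2)] · Φ₁(b, 1; a + b + p/2 + 1; s + Z/2, 1−1/τ²) / Φ₁(b, 1; a + b + p/2; s + Z/2, 1−1/τ²). -/

import Mathlib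

open MeasureTheory Set

/-- The unnormalized hypergeometric-beta kernel
`κ^{a−1} (1−κ)^{b−1} {1/τ² + (1 − 1/τ²)κ}^{−1} e^{−sκ}`. -/
noncomputable def hbKer (a b τ s κ : ℝ) : ℝ :=
  κ ^ (a - 1) * (1 - κ) ^ (b - 1) * (1 / τ ^ 2 + (1 - 1 / τ ^ 2) * κ)⁻¹ *
    Real.exp (-(s * κ))

/-- The normalizing constant `C(a,b,τ,s)`. -/
noncomputable def hbC (a b τ s : ℝ) : ℝ :=
  ∫ κ in Set.Ioo (0 : ℝ) 1, hbKer a b τ s κ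

/-- The hypergeometric-beta density `π_{a,b,τ,s}` on `(0,1)`. -/
noncomputable def hbPdf (a b τ s κ : ℝ) : ℝ :=
  (hbC a b τ s)⁻¹ * hbKer a b τ s κ

/-- The rising factorial `(q)_k = q (q+1) ⋯ (q+k−1)`. -/
noncomputable def risingFac (q : ℝ) (k : ℕ) : ℝ :=
  ∏ i ∈ Finset.range k, (q + (i : ℝ))

/-- The degenerate (Humbert) hypergeometric function of two variables
`Φ₁(α, β; γ; x, y) = Σ_{m,n≥0} [(α)_{m+n} (β)_n / ((γ)_{m+n} m! n!)] x^m y^n`. -/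
noncomputable def Phi1 (α β γ x y : ℝ) : ℝ :=
  ∑' p : ℕ × ℕ,
    risingFac α (p.1 + p.2) * risingFac β p.2 /
      (risingFac γ (p.1 + p.2) * (Nat.factorial p.1) * (Nat.factorial p.2)) *
      x ^ p.1 * y ^ p.2

/-- The Euler beta function `B(a,b) = Γ(a)Γ(b)/Γ(a+b)`. -/
noncomputable def betaFn (a b : ℝ) : ℝ :=
  Real.Gamma a * Real.Gamma b / Real.Gamma (a + b)

/-- The `p`-dimensional normal density with mean `μ` and covariance `c I`. -/
noncomputable def mvNormPdf (p : ℕ) (x μ : EuclideanSpace ℝ (Fin p)) (c : ℝ) : ℝ :=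
  (2 * Real.pi * c) ^ (-(p : ℝ) / 2) * Real.exp (-‖x - μ‖ ^ 2 / (2 * c))

/-- The joint density `f(β, κ) = N_p(y; β, I) N_p(β; 0, (1/κ − 1) I) π_{a,b,τ,s}(κ)`. -/
noncomputable def jointFp (p : ℕ) (a b τ s : ℝ) (y β : EuclideanSpace ℝ (Fin p))
    (κ : ℝ) : ℝ :=
  mvNormPdf p y β 1 * mvNormPdf p β 0 (1 / κ - 1) * hbPdf a b τ s κ

/-!
Integrating out `β` is a Gaussian convolution:
`∫ N_p(y; β, I) N_p(β; 0, (1/κ - 1) I) dβ = N_p(y; 0, κ⁻¹ I) = (2π)^{-p/2} κ^{p/2} e^{-κ‖y‖²/2}`,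
so numerator and denominator are `C(a + p/2 + j, b, τ, s + ‖y‖²/2)`, `j = 1, 0`, times a common
factor. With `q = 1 - 1/τ²`, expanding `e^{-xκ} = e^{-x} e^{x(1-κ)}` and
`{1/τ² + q κ}⁻¹ = {1 - q(1-κ)}⁻¹ = Σₙ (q(1-κ))ⁿ` and integrating term by term against Beta kernels
gives `C(A, b, τ, x) = e^{-x} B(A, b) Φ₁(b, 1; A + b; x, q)`; the ratio then reduces via
`B(A + 1, b) = A/(A + b) · B(A, b)`.
-/

open ProbabilityTheory

section Beta

noncomputable def betaKer (u v κ : ℝ) : ℝ := κ ^ (u - 1) * (1 - κ) ^ (v - 1)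

lemma betaKer_pos {u v κ : ℝ} (hκ : κ ∈ Ioo (0 : ℝ) 1) : 0 < betaKer u v κ :=
  mul_pos (Real.rpow_pos_of_pos hκ.1 _) (Real.rpow_pos_of_pos (sub_pos.2 hκ.2) _)

lemma betaKer_add_nat_right {u v κ : ℝ} (hκ : κ < 1) (n : ℕ) :
    betaKer u (v + n) κ = betaKer u v κ * (1 - κ) ^ n := by
  rw [betaKer, betaKer, add_sub_right_comm, Real.rpow_add_natCast (sub_pos.2 hκ).ne']
  ring

lemma ofReal_betaKer {u v κ : ℝ} (hκ : κ ∈ Ioo (0 : ℝ) 1) :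
    ((betaKer u v κ : ℝ) : ℂ) = (κ : ℂ) ^ ((u : ℂ) - 1) * (1 - (κ : ℂ)) ^ ((v : ℂ) - 1) := by
  rw [betaKer, Complex.ofReal_mul, Complex.ofReal_cpow hκ.1.le,
    Complex.ofReal_cpow (sub_pos.2 hκ.2).le]
  push_cast
  rfl

lemma integrableOn_betaKer {u v : ℝ} (hu : 0 < u) (hv : 0 < v) :
    IntegrableOn (betaKer u v) (Ioo 0 1) := by
  have hc := Complex.betaIntegral_convergent (u := u) (v := v) (by simpa) (by simpa)
  rw [intervalIntegrable_iff_integrableOn_Ioc_of_le zero_le_one] at hc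
  refine ((hc.mono_set Ioo_subset_Ioc_self).congr_fun (fun κ hκ => (ofReal_betaKer hκ).symm)
    measurableSet_Ioo).re.congr (Filter.Eventually.of_forall fun κ => ?_)
  simp

lemma setIntegral_betaKer {u v : ℝ} (hu : 0 < u) (hv : 0 < v) :
    ∫ κ in Ioo (0 : ℝ) 1, betaKer u v κ = beta u v := by
  rw [beta_eq_betaIntegralReal u v hu hv, Complex.betaIntegral,
    intervalIntegral.integral_of_le zero_le_one, integral_Ioc_eq_integral_Ioo,
    ← setIntegral_congr_fun measurableSet_Ioo fun κ hκ => ofReal_betaKer (u := u) (v := v) hκ,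
    integral_complex_ofReal, Complex.ofReal_re]

lemma risingFac_pos {q : ℝ} (hq : 0 < q) (k : ℕ) : 0 < risingFac q k :=
  Finset.prod_pos fun _ _ => by positivity

lemma risingFac_le_risingFac {q q' : ℝ} (hq : 0 ≤ q) (hqq' : q ≤ q') (k : ℕ) :
    risingFac q k ≤ risingFac q' k :=
  Finset.prod_le_prod (fun _ _ => by positivity) fun _ _ => by linarith

lemma risingFac_one (n : ℕ) : risingFac 1 n = n.factorial := by
  induction n with
  | zero => simp [risingFac]
  | succ n ih =>
    rw [risingFac, Finset.prod_range_succ, ← risingFac, ih, Nat.factorial_succ]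
    push_cast
    ring

lemma Gamma_add_nat_eq_risingFac_mul {q : ℝ} (hq : 0 < q) (k : ℕ) :
    Real.Gamma (q + k) = risingFac q k * Real.Gamma q := by
  induction k with
  | zero => simp [risingFac]
  | succ k ih =>
    rw [Nat.cast_succ, ← add_assoc, Real.Gamma_add_one (by positivity), ih]
    simp only [risingFac, Finset.prod_range_succ]
    ring

lemma beta_add_nat_right {u v : ℝ} (hu : 0 < u) (hv : 0 < v) (n : ℕ) :
    beta u (v + n) = beta u v * (risingFac v n / risingFac (u + v) n) := by
  have hΓ := (Real.Gamma_pos_of_pos (add_pos hu hv)).ne'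
  have hr := (risingFac_pos (add_pos hu hv) n).ne'
  rw [beta, beta, ← add_assoc, Gamma_add_nat_eq_risingFac_mul hv,
    Gamma_add_nat_eq_risingFac_mul (add_pos hu hv)]
  field_simp

lemma beta_add_nat_right_le {u v : ℝ} (hu : 0 < u) (hv : 0 < v) (n : ℕ) :
    beta u (v + n) ≤ beta u v := by
  rw [beta_add_nat_right hu hv]
  refine mul_le_of_le_one_right (beta_pos hu hv).le ?_
  exact div_le_one_of_le₀ (risingFac_le_risingFac hv.le (by linarith) n)
    (risingFac_pos (add_pos hu hv) n).le

lemma beta_add_one_left {u v : ℝ} (hu : 0 < u) (hv : 0 < v) :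
    beta (u + 1) v = beta u v * (u / (u + v)) := by
  have hΓ := (Real.Gamma_pos_of_pos (add_pos hu hv)).ne'
  rw [beta, beta, Real.Gamma_add_one hu.ne', add_right_comm,
    Real.Gamma_add_one (add_pos hu hv).ne']
  field_simp

end Beta

section HypergeometricBetaKernel

variable {A b τ x : ℝ}

lemma hbKer_eq_betaKer_mul (κ : ℝ) :
    hbKer A b τ x κ
      = betaKer A b κ * (1 - (1 - 1 / τ ^ 2) * (1 - κ))⁻¹ * Real.exp (-(x * κ)) := by
  rw [hbKer, betaKer]
  ring_nf

lemma mul_hbKer {κ : ℝ} (hκ : 0 < κ) : κ * hbKer A b τ x κ = hbKer (A + 1) b τ x κ := by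
  rw [hbKer, hbKer, add_sub_right_comm, Real.rpow_add_one hκ.ne']
  ring

lemma one_sub_abs_le_one_sub_mul {q κ : ℝ} (hκ : κ ∈ Ioo (0 : ℝ) 1) :
    1 - |q| ≤ 1 - q * (1 - κ) := by
  have h1κ : 0 < 1 - κ := sub_pos.2 hκ.2
  have : q * (1 - κ) ≤ |q| := calc
    q * (1 - κ) ≤ |q| * (1 - κ) := mul_le_mul_of_nonneg_right (le_abs_self q) h1κ.le
    _ ≤ |q| := mul_le_of_le_one_right (abs_nonneg q) (by linarith [hκ.1])
  linarith

lemma hbKer_pos (hτ : |1 - 1 / τ ^ 2| < 1) {κ : ℝ} (hκ : κ ∈ Ioo (0 : ℝ) 1) :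
    0 < hbKer A b τ x κ := by
  have hden := one_sub_abs_le_one_sub_mul (q := 1 - 1 / τ ^ 2) hκ
  have hker := betaKer_pos (u := A) (v := b) hκ
  have hden_pos : 0 < 1 - (1 - 1 / τ ^ 2) * (1 - κ) := by linarith
  rw [hbKer_eq_betaKer_mul]
  positivity

lemma integrableOn_hbKer (hA : 0 < A) (hb : 0 < b) (hτ : |1 - 1 / τ ^ 2| < 1) :
    IntegrableOn (hbKer A b τ x) (Ioo 0 1) := by
  refine Integrable.mono' ((integrableOn_betaKer hA hb).const_mul
    ((1 - |1 - 1 / τ ^ 2|)⁻¹ * Real.exp |x|)) (by unfold hbKer; fun_prop) ?_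
  refine (ae_restrict_iff' measurableSet_Ioo).2 (ae_of_all _ fun κ hκ => ?_)
  have hden := one_sub_abs_le_one_sub_mul (q := 1 - 1 / τ ^ 2) hκ
  have hexp : Real.exp (-(x * κ)) ≤ Real.exp |x| := by
    refine Real.exp_le_exp.2 ((neg_le_abs _).trans ?_)
    rw [abs_mul, abs_of_pos hκ.1]
    exact mul_le_of_le_one_right (abs_nonneg x) hκ.2.le
  rw [Real.norm_of_nonneg (hbKer_pos hτ hκ).le, hbKer_eq_betaKer_mul, mul_comm _ (betaKer A b κ),
    mul_assoc]
  exact mul_le_mul_of_nonneg_left (mul_le_mul (inv_anti₀ (by linarith) hden) hexp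
    (Real.exp_pos _).le (inv_nonneg.2 (by linarith))) (betaKer_pos hκ).le

lemma hbC_pos (hA : 0 < A) (hb : 0 < b) (hτ : |1 - 1 / τ ^ 2| < 1) : 0 < hbC A b τ x := by
  rw [hbC, setIntegral_pos_iff_support_of_nonneg_ae
    ((ae_restrict_iff' measurableSet_Ioo).2 (ae_of_all _ fun κ hκ => (hbKer_pos hτ hκ).le))
    (integrableOn_hbKer hA hb hτ),
    inter_eq_right.2 fun κ hκ => Function.mem_support.2 (hbKer_pos hτ hκ).ne', Real.volume_Ioo]
  norm_num

/-- `e^{-xκ} (1 - q (1 - κ))⁻¹ = Σ_{m,n} hbCoeff x q (m, n) (1 - κ)^{m+n}`. -/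
noncomputable def hbCoeff (x q : ℝ) (mn : ℕ × ℕ) : ℝ :=
  Real.exp (-x) * (x ^ mn.1 / mn.1.factorial) * q ^ mn.2

lemma summable_norm_hbCoeff (x : ℝ) {q : ℝ} (hq : |q| < 1) :
    Summable fun mn => ‖hbCoeff x q mn‖ := by
  have hexp : Summable fun m : ℕ => ‖|x| ^ m / m.factorial‖ :=
    summable_abs_iff.2 (Real.summable_pow_div_factorial |x|)
  have hgeom : Summable fun n : ℕ => ‖|q| ^ n‖ :=
    summable_abs_iff.2 (summable_geometric_of_abs_lt_one (by rwa [abs_abs]))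
  refine ((summable_mul_of_summable_norm hexp hgeom).mul_left (Real.exp (-x))).congr fun mn => ?_
  simp [hbCoeff, abs_of_pos (Real.exp_pos _), mul_assoc]

lemma hbKer_eq_tsum (hτ : |1 - 1 / τ ^ 2| < 1) {κ : ℝ} (hκ : κ ∈ Ioo (0 : ℝ) 1) :
    hbKer A b τ x κ
      = ∑' mn : ℕ × ℕ, hbCoeff x (1 - 1 / τ ^ 2) mn * betaKer A (b + ↑(mn.1 + mn.2)) κ := by
  set q := 1 - 1 / τ ^ 2
  have h1κ : 0 < 1 - κ := sub_pos.2 hκ.2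
  have hqκ : |q * (1 - κ)| < 1 := by
    rw [abs_mul, abs_of_pos h1κ]
    nlinarith [abs_nonneg q, hκ.1]
  have hexp : Real.exp (-(x * κ))
      = Real.exp (-x) * ∑' m : ℕ, (x * (1 - κ)) ^ m / m.factorial := by
    rw [(by ring : -(x * κ) = -x + x * (1 - κ)), Real.exp_add, Real.exp_eq_exp_ℝ,
      NormedSpace.exp_eq_tsum_div]
  have hsum_exp : Summable fun m : ℕ => ‖(x * (1 - κ)) ^ m / m.factorial‖ :=
    summable_abs_iff.2 (Real.summable_pow_div_factorial _)
  have hsum_geom : Summable fun n : ℕ => ‖(q * (1 - κ)) ^ n‖ :=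
    summable_abs_iff.2 (summable_geometric_of_abs_lt_one hqκ)
  calc hbKer A b τ x κ
      = Real.exp (-x) * betaKer A b κ * ((∑' m : ℕ, (x * (1 - κ)) ^ m / m.factorial) *
          ∑' n : ℕ, (q * (1 - κ)) ^ n) := by
        rw [hbKer_eq_betaKer_mul, ← tsum_geometric_of_abs_lt_one hqκ, hexp]
        ring
    _ = _ := by
      rw [tsum_mul_tsum_of_summable_norm hsum_exp hsum_geom, ← tsum_mul_left]
      refine tsum_congr fun mn => ?_
      rw [hbCoeff, betaKer_add_nat_right hκ.2, pow_add, mul_pow, mul_pow]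
      ring

lemma hbC_eq_tsum (hA : 0 < A) (hb : 0 < b) (hτ : |1 - 1 / τ ^ 2| < 1) :
    hbC A b τ x
      = ∑' mn : ℕ × ℕ, hbCoeff x (1 - 1 / τ ^ 2) mn * beta A (b + ↑(mn.1 + mn.2)) := by
  have hb' : ∀ n : ℕ, 0 < b + n := fun n => by positivity
  have hint : ∀ mn : ℕ × ℕ, IntegrableOn
      (fun κ => hbCoeff x (1 - 1 / τ ^ 2) mn * betaKer A (b + ↑(mn.1 + mn.2)) κ) (Ioo 0 1) :=
    fun mn => (integrableOn_betaKer hA (hb' _)).const_mul _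
  have hnorm : ∀ mn : ℕ × ℕ,
      ∫ κ in Ioo (0 : ℝ) 1, ‖hbCoeff x (1 - 1 / τ ^ 2) mn * betaKer A (b + ↑(mn.1 + mn.2)) κ‖
        = ‖hbCoeff x (1 - 1 / τ ^ 2) mn‖ * beta A (b + ↑(mn.1 + mn.2)) := fun mn => by
    rw [← setIntegral_betaKer hA (hb' _), ← integral_const_mul]
    refine setIntegral_congr_fun measurableSet_Ioo fun κ hκ => ?_
    rw [norm_mul, Real.norm_of_nonneg (betaKer_pos hκ).le]
  have hsum : Summable fun mn : ℕ × ℕ => ∫ κ in Ioo (0 : ℝ) 1,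
      ‖hbCoeff x (1 - 1 / τ ^ 2) mn * betaKer A (b + ↑(mn.1 + mn.2)) κ‖ := by
    simp_rw [hnorm]
    refine Summable.of_nonneg_of_le (fun mn => by positivity [beta_pos hA (hb' (mn.1 + mn.2))])
      (fun mn => mul_le_mul_of_nonneg_left (beta_add_nat_right_le hA hb _) (norm_nonneg _))
      ((summable_norm_hbCoeff x hτ).mul_right (beta A b))
  rw [hbC, setIntegral_congr_fun measurableSet_Ioo fun κ hκ => hbKer_eq_tsum hτ hκ,
    ← integral_tsum_of_summable_integral_norm hint hsum]
  refine tsum_congr fun mn => ?_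
  rw [integral_const_mul, setIntegral_betaKer hA (hb' _)]

lemma hbC_eq_Phi1 (hA : 0 < A) (hb : 0 < b) (hτ : |1 - 1 / τ ^ 2| < 1) :
    hbC A b τ x = Real.exp (-x) * beta A b * Phi1 b 1 (A + b) x (1 - 1 / τ ^ 2) := by
  rw [hbC_eq_tsum hA hb hτ, Phi1, ← tsum_mul_left]
  refine tsum_congr fun ⟨m, n⟩ => ?_
  have hr := (risingFac_pos (add_pos hA hb) (m + n)).ne'
  have hm := m.factorial_pos.ne'
  have hn := n.factorial_pos.ne'
  rw [hbCoeff, beta_add_nat_right hA hb, risingFac_one]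
  field_simp

end HypergeometricBetaKernel

section Gaussian

variable {p : ℕ}

lemma integral_exp_neg_norm_sub_sq_div {w : ℝ} (hw : 0 < w) (m : EuclideanSpace ℝ (Fin p)) :
    ∫ β : EuclideanSpace ℝ (Fin p), Real.exp (-‖β - m‖ ^ 2 / (2 * w))
      = (2 * Real.pi * w) ^ ((p : ℝ) / 2) := by
  have h := GaussianFourier.integral_rexp_neg_mul_sq_norm (V := EuclideanSpace ℝ (Fin p))
    (b := 1 / (2 * w)) (by positivity)
  rw [finrank_euclideanSpace_fin, show Real.pi / (1 / (2 * w)) = 2 * Real.pi * w by field_simp]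
    at h
  rw [integral_sub_right_eq_self (fun β => Real.exp (-‖β‖ ^ 2 / (2 * w))) m, ← h]
  congr with β
  ring_nf

lemma norm_sub_sq_div_add_norm_sq_div {u v : ℝ} (hu : 0 < u) (hv : 0 < v)
    (y β : EuclideanSpace ℝ (Fin p)) :
    ‖y - β‖ ^ 2 / (2 * u) + ‖β‖ ^ 2 / (2 * v)
      = ‖y‖ ^ 2 / (2 * (u + v)) + ‖β - (v / (u + v)) • y‖ ^ 2 / (2 * (u * v / (u + v))) := by
  rw [norm_sub_sq_real, norm_sub_sq_real, real_inner_smul_right, real_inner_comm β y, norm_smul,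
    Real.norm_eq_abs, abs_of_pos (by positivity : 0 < v / (u + v))]
  field_simp
  ring

lemma integral_mvNormPdf_mul_mvNormPdf {u v : ℝ} (hu : 0 < u) (hv : 0 < v)
    (y : EuclideanSpace ℝ (Fin p)) :
    ∫ β, mvNormPdf p y β u * mvNormPdf p β 0 v = mvNormPdf p y 0 (u + v) := by
  have hw : 0 < u * v / (u + v) := by positivity
  have hprod : ∀ β, mvNormPdf p y β u * mvNormPdf p β 0 v
      = ((2 * Real.pi * u) ^ (-(p : ℝ) / 2) * (2 * Real.pi * v) ^ (-(p : ℝ) / 2) *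
          Real.exp (-‖y‖ ^ 2 / (2 * (u + v)))) *
        Real.exp (-‖β - (v / (u + v)) • y‖ ^ 2 / (2 * (u * v / (u + v)))) := by
    intro β
    have hexp : -‖y - β‖ ^ 2 / (2 * u) + -‖β‖ ^ 2 / (2 * v)
        = -‖y‖ ^ 2 / (2 * (u + v)) + -‖β - (v / (u + v)) • y‖ ^ 2 / (2 * (u * v / (u + v))) := by
      linear_combination - norm_sub_sq_div_add_norm_sq_div hu hv y β
    simp only [mvNormPdf, sub_zero]
    rw [mul_mul_mul_comm, ← Real.exp_add, hexp, Real.exp_add]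
    ring
  have hconst : (2 * Real.pi * (u + v)) ^ (-(p : ℝ) / 2)
      = (2 * Real.pi * u) ^ (-(p : ℝ) / 2) * (2 * Real.pi * v) ^ (-(p : ℝ) / 2) *
        (2 * Real.pi * (u * v / (u + v))) ^ ((p : ℝ) / 2) := by
    have hsplit : 2 * Real.pi * (u + v)
        = (2 * Real.pi * u) * (2 * Real.pi * v) / (2 * Real.pi * (u * v / (u + v))) := by
      field_simp
    rw [hsplit, Real.div_rpow (by positivity) (by positivity),
      Real.mul_rpow (by positivity) (by positivity), neg_div,
      Real.rpow_neg (x := 2 * Real.pi * (u * v / (u + v))) (by positivity), div_inv_eq_mul]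
  simp_rw [hprod]
  rw [integral_const_mul, integral_exp_neg_norm_sub_sq_div hw, mvNormPdf, sub_zero, hconst]
  ring

end Gaussian

section JointDensity

variable {p : ℕ} {a b τ s : ℝ}

lemma mvNormPdf_zero_one_div_mul_hbKer (y : EuclideanSpace ℝ (Fin p)) {κ : ℝ} (hκ : 0 < κ) :
    mvNormPdf p y 0 (1 / κ) * hbKer a b τ s κ
      = (2 * Real.pi) ^ (-(p : ℝ) / 2) * hbKer (a + p / 2) b τ (s + ‖y‖ ^ 2 / 2) κ := by
  have hconst : (2 * Real.pi * (1 / κ)) ^ (-(p : ℝ) / 2)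
      = (2 * Real.pi) ^ (-(p : ℝ) / 2) * κ ^ ((p : ℝ) / 2) := by
    rw [mul_one_div, Real.div_rpow (by positivity) hκ.le, neg_div,
      Real.rpow_neg (x := κ) hκ.le, div_inv_eq_mul]
  have hpow : κ ^ (a + p / 2 - 1) = κ ^ ((p : ℝ) / 2) * κ ^ (a - 1) := by
    rw [← Real.rpow_add hκ]
    ring_nf
  have hexp : Real.exp (-((s + ‖y‖ ^ 2 / 2) * κ))
      = Real.exp (-‖y‖ ^ 2 / (2 * (1 / κ))) * Real.exp (-(s * κ)) := by
    rw [← Real.exp_add]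
    congr 1
    field_simp
    ring
  simp only [mvNormPdf, hbKer, sub_zero, hconst, hpow, hexp]
  ring

lemma integral_jointFp (y : EuclideanSpace ℝ (Fin p)) {κ : ℝ} (hκ : κ ∈ Ioo (0 : ℝ) 1) :
    ∫ β, jointFp p a b τ s y β κ
      = (2 * Real.pi) ^ (-(p : ℝ) / 2) * (hbC a b τ s)⁻¹ *
        hbKer (a + p / 2) b τ (s + ‖y‖ ^ 2 / 2) κ := by
  have hvar : 0 < 1 / κ - 1 := by
    rw [sub_pos, lt_one_div one_pos hκ.1, one_div_one]
    exact hκ.2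
  simp only [jointFp, hbPdf]
  rw [integral_mul_const, integral_mvNormPdf_mul_mvNormPdf one_pos hvar, add_sub_cancel,
    mul_left_comm, mvNormPdf_zero_one_div_mul_hbKer y hκ.1]
  ring

lemma setIntegral_integral_jointFp (y : EuclideanSpace ℝ (Fin p)) :
    ∫ κ in Ioo (0 : ℝ) 1, ∫ β, jointFp p a b τ s y β κ
      = (2 * Real.pi) ^ (-(p : ℝ) / 2) * (hbC a b τ s)⁻¹ *
        hbC (a + p / 2) b τ (s + ‖y‖ ^ 2 / 2) := by
  rw [setIntegral_congr_fun measurableSet_Ioo fun κ hκ => integral_jointFp y hκ,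
    integral_const_mul]
  rfl

lemma setIntegral_integral_mul_jointFp (y : EuclideanSpace ℝ (Fin p)) :
    ∫ κ in Ioo (0 : ℝ) 1, ∫ β, κ * jointFp p a b τ s y β κ
      = (2 * Real.pi) ^ (-(p : ℝ) / 2) * (hbC a b τ s)⁻¹ *
        hbC (a + p / 2 + 1) b τ (s + ‖y‖ ^ 2 / 2) := by
  refine (setIntegral_congr_fun measurableSet_Ioo fun κ hκ => ?_).trans
    (integral_const_mul _ _)
  rw [integral_const_mul, integral_jointFp y hκ, mul_left_comm, mul_hbKer hκ.1]

end JointDensity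

theorem hb_shrinkage_weight_general (p : ℕ) (a b τ s : ℝ) (ha : 0 < a) (hb : 0 < b)
    (hτ' : |1 - 1 / τ ^ 2| < 1) (y : EuclideanSpace ℝ (Fin p)) :
    (∫ κ in Set.Ioo (0 : ℝ) 1, ∫ β : EuclideanSpace ℝ (Fin p), κ * jointFp p a b τ s y β κ) /
        (∫ κ in Set.Ioo (0 : ℝ) 1, ∫ β : EuclideanSpace ℝ (Fin p), jointFp p a b τ s y β κ) =
      (a + p / 2) / (a + b + p / 2) *
        (Phi1 b 1 (a + b + p / 2 + 1) (s + ‖y‖ ^ 2 / 2) (1 - 1 / τ ^ 2) /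
          Phi1 b 1 (a + b + p / 2) (s + ‖y‖ ^ 2 / 2) (1 - 1 / τ ^ 2)) := by
  have hA : 0 < a + p / 2 := by positivity
  have hnorm : (2 * Real.pi) ^ (-(p : ℝ) / 2) * (hbC a b τ s)⁻¹ ≠ 0 :=
    mul_ne_zero (by positivity) (inv_ne_zero (hbC_pos ha hb hτ').ne')
  have hEB : Real.exp (-(s + ‖y‖ ^ 2 / 2)) * beta (a + p / 2) b ≠ 0 :=
    mul_ne_zero (Real.exp_pos _).ne' (beta_pos hA hb).ne'
  rw [setIntegral_integral_mul_jointFp, setIntegral_integral_jointFp, mul_div_mul_left _ _ hnorm,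
    hbC_eq_Phi1 (by positivity) hb hτ', hbC_eq_Phi1 hA hb hτ', beta_add_one_left hA hb,
    show a + p / 2 + 1 + b = a + b + p / 2 + 1 by ring, show a + p / 2 + b = a + b + p / 2 by ring,
    ← mul_assoc, mul_div_mul_comm, mul_div_cancel_left₀ _ hEB]

theorem hb_shrinkage_weight (p : ℕ) (hp : 1 ≤ p) (a b τ s : ℝ) (ha : 0 < a) (hb : 0 < b)
    (hτ : 0 < τ) (hτ' : |1 - 1 / τ ^ 2| < 1) (y : EuclideanSpace ℝ (Fin p)) :
    (∫ κ in Set.Ioo (0 : ℝ) 1, ∫ β : EuclideanSpace ℝ (Fin p), κ * jointFp p a b τ s y β κ) /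
        (∫ κ in Set.Ioo (0 : ℝ) 1, ∫ β : EuclideanSpace ℝ (Fin p), jointFp p a b τ s y β κ) =
      (a + p / 2) / (a + b + p / 2) *
        (Phi1 b 1 (a + b + p / 2 + 1) (s + ‖y‖ ^ 2 / 2) (1 - 1 / τ ^ 2) /
          Phi1 b 1 (a + b + p / 2) (s + ‖y‖ ^ 2 / 2) (1 - 1 / τ ^ 2)) :=
  hb_shrinkage_weight_general p a b τ s ha hb hτ' y
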